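/- For every odd integer L ≥ 5 and any two triples (a,b,c) and (a',b',c') of nonnegative integers with a + b + c = a' + b' + c' = (L − 5)/2, the braids δ_{a,b,c} and δ_{a',b',c'} are conjugate in the braid group B_5. -/

import Mathlib

/-!
Write `Δ₂₃₄ = σ2σ3σ2` (`halfTwist234`) for the half twist of strands 2–4,
`P = σ1σ2σ3·σ3σ2σ1` (`loop4`) for the pure braid in which strand 1 encircles strands 2–4, and
`Q = σ1σ2σ3·σ4²·σ3σ2σ1` (`loop5`) for the one in which it encircles strands 2–5. Since `σ1σ2σ3`
shifts `σ1 ↦ σ2 ↦ σ3`, one finds `S = σ3²P`, `Z = σ3σ2²σ3P` and `X = σ3²Q`, and both `P` and `Q`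
commute with `σ2` and `σ3`.

Consequently `σ3²` commutes with `X`, `S`, `Y` and, being `SP⁻¹`, conjugates `ZS` to `SZ`. The
full twist `Δ₂₃₄²` commutes with `X`, `S`, `Z`; it equals `Δ²P⁻¹`, where `Δ = Δ₂₃₄σ1σ2σ3`
(`halfTwist`) is the half twist of `B_4`, whose square is central there, so it conjugates `SY` to
`YS`. Thus a factor `S` can be moved across `Z` or across `Y` by conjugation, and every
`δ_{a,b,c}` is conjugate to `δ_{a+b+c,0,0}`.
-/

/-- The Artin relations for the braid group with `n` generators
`σ_1, …, σ_n` (indexed by `Fin n` via `σ_{i+1} ↔ i`). -/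
def braidRels (n : ℕ) : Set (FreeGroup (Fin n)) :=
  { r | ∃ i j : Fin n,
      ((i : ℕ) + 1 = (j : ℕ) ∧
        r = FreeGroup.of i * FreeGroup.of j * FreeGroup.of i *
            (FreeGroup.of j * FreeGroup.of i * FreeGroup.of j)⁻¹) ∨
      ((i : ℕ) + 2 ≤ (j : ℕ) ∧
        r = FreeGroup.of i * FreeGroup.of j * (FreeGroup.of j * FreeGroup.of i)⁻¹) }

/-- The braid group `B_5`, presented with generators `σ_1, …, σ_4` and the Artin
relations. -/
abbrev B5 : Type := PresentedGroup (braidRels 4)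

/-- The Artin generator `σ_{i+1}` of `B_5` (so `s 0 = σ_1`, …, `s 3 = σ_4`). -/
def s (i : Fin 4) : B5 := PresentedGroup.of i

/-- `X = σ1σ2σ3σ2σ4·σ2σ4σ3σ2σ1 ∈ B_5`. -/
def X : B5 := (s 0 * s 1 * s 2 * s 1 * s 3) * (s 1 * s 3 * s 2 * s 1 * s 0)

/-- `S = σ1σ2σ3σ2·σ2σ3σ2σ1 ∈ B_5`. -/
def S : B5 := (s 0 * s 1 * s 2 * s 1) * (s 1 * s 2 * s 1 * s 0)

/-- `Y = σ1σ3 ∈ B_5`. -/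
def Y : B5 := s 0 * s 2

/-- `Z = σ1σ2σ3σ2σ1·σ1σ2σ3σ2σ1 ∈ B_5`. -/
def Z : B5 := (s 0 * s 1 * s 2 * s 1 * s 0) * (s 0 * s 1 * s 2 * s 1 * s 0)

/-- The braid `δ_{a,b,c} = X·S^a·Y·S^b·Z·S^c ∈ B_5`. -/
def deltaABC (a b c : ℕ) : B5 := X * S ^ a * Y * S ^ b * Z * S ^ c

section Monoid

variable {M : Type*} [Monoid M] {x y : M}

theorem SemiconjBy.mul_of_braid (h : x * y * x = y * x * y) : SemiconjBy (x * y) x y := by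
  simpa only [SemiconjBy, mul_assoc] using h

theorem SemiconjBy.mul_of_braid' (h : x * y * x = y * x * y) : SemiconjBy (y * x) y x := by
  simpa only [SemiconjBy, mul_assoc] using h.symm

theorem SemiconjBy.mul_mul_of_braid (h : x * y * x = y * x * y) :
    SemiconjBy (x * y * x) x y := by
  unfold SemiconjBy
  conv_lhs => rw [h]
  simp only [mul_assoc]

theorem SemiconjBy.mul_mul_of_braid' (h : x * y * x = y * x * y) :
    SemiconjBy (x * y * x) y x := by
  unfold SemiconjBy
  conv_rhs => rw [h]
  simp only [mul_assoc]

end Monoid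

theorem SemiconjBy.isConj {G : Type*} [Group G] {g x y : G} (h : SemiconjBy g x y) :
    IsConj x y :=
  ⟨toUnits g, h⟩

theorem s_braid {i j : Fin 4} (hij : (i : ℕ) + 1 = j) : s i * s j * s i = s j * s i * s j :=
  PresentedGroup.mk_eq_mk_of_mul_inv_mem ⟨i, j, .inl ⟨hij, rfl⟩⟩

theorem s_commute {i j : Fin 4} (hij : (i : ℕ) + 2 ≤ j) : Commute (s i) (s j) :=
  PresentedGroup.mk_eq_mk_of_mul_inv_mem ⟨i, j, .inr ⟨hij, rfl⟩⟩

theorem braid_s01 : s 0 * s 1 * s 0 = s 1 * s 0 * s 1 := s_braid rfl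

theorem braid_s12 : s 1 * s 2 * s 1 = s 2 * s 1 * s 2 := s_braid rfl

theorem commute_s02 : Commute (s 0) (s 2) := s_commute (by decide)

theorem commute_s03 : Commute (s 0) (s 3) := s_commute (by decide)

theorem commute_s13 : Commute (s 1) (s 3) := s_commute (by decide)

def shift : B5 := s 0 * s 1 * s 2

def shiftRev : B5 := s 2 * s 1 * s 0

def loop4 : B5 := shift * shiftRev

def loop5 : B5 := shift * s 3 ^ 2 * shiftRev

def halfTwist234 : B5 := s 1 * s 2 * s 1

def halfTwist : B5 := halfTwist234 * shift

theorem shift_semiconjBy_s0 : SemiconjBy shift (s 0) (s 1) :=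
  (SemiconjBy.mul_of_braid braid_s01).mul_left commute_s02.symm

theorem shift_semiconjBy_s1 : SemiconjBy shift (s 1) (s 2) := by
  rw [shift, mul_assoc]
  exact SemiconjBy.mul_left commute_s02 (SemiconjBy.mul_of_braid braid_s12)

theorem shiftRev_semiconjBy_s1 : SemiconjBy shiftRev (s 1) (s 0) := by
  rw [shiftRev, mul_assoc]
  exact SemiconjBy.mul_left commute_s02.symm (SemiconjBy.mul_of_braid' braid_s01)

theorem shiftRev_semiconjBy_s2 : SemiconjBy shiftRev (s 2) (s 1) :=
  (SemiconjBy.mul_of_braid' braid_s12).mul_left commute_s02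

theorem commute_loop4_s1 : Commute loop4 (s 1) :=
  shift_semiconjBy_s0.mul_left shiftRev_semiconjBy_s1

theorem commute_loop4_s2 : Commute loop4 (s 2) :=
  shift_semiconjBy_s1.mul_left shiftRev_semiconjBy_s2

theorem commute_loop5_s1 : Commute loop5 (s 1) :=
  (shift_semiconjBy_s0.mul_left (commute_s03.symm.pow_left 2)).mul_left shiftRev_semiconjBy_s1

theorem commute_loop5_s2 : Commute loop5 (s 2) :=
  (shift_semiconjBy_s1.mul_left (commute_s13.symm.pow_left 2)).mul_left shiftRev_semiconjBy_s2

theorem shift_mul_mul_shiftRev {w w' : B5} (h : SemiconjBy shift w w') :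
    shift * w * shiftRev = w' * loop4 := by
  rw [h.eq, loop4, mul_assoc]

theorem S_eq : S = s 2 ^ 2 * loop4 := by
  rw [← shift_mul_mul_shiftRev (shift_semiconjBy_s1.pow_right 2)]
  simp only [S, shift, shiftRev, sq, mul_assoc]

theorem Z_eq : Z = s 2 * s 1 ^ 2 * s 2 * loop4 := by
  rw [← shift_mul_mul_shiftRev (((shift_semiconjBy_s1.mul_right
    (shift_semiconjBy_s0.pow_right 2))).mul_right shift_semiconjBy_s1)]
  simp only [Z, shift, shiftRev, sq, mul_assoc]

theorem X_eq : X = s 2 ^ 2 * loop5 := by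
  calc X = shift * s 1 ^ 2 * s 3 ^ 2 * shiftRev := by
        simp only [X, shift, shiftRev, sq, mul_assoc]; rw [commute_s13.symm.left_comm]
    _ = s 2 ^ 2 * loop5 := by
        rw [(shift_semiconjBy_s1.pow_right 2).eq, loop5]; simp only [mul_assoc]

theorem semiconjBy_halfTwist234_s1 : SemiconjBy halfTwist234 (s 1) (s 2) :=
  SemiconjBy.mul_mul_of_braid braid_s12

theorem semiconjBy_halfTwist234_s2 : SemiconjBy halfTwist234 (s 2) (s 1) :=
  SemiconjBy.mul_mul_of_braid' braid_s12

theorem halfTwist234_mul_shift : halfTwist234 * shift = shiftRev * halfTwist234 :=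
  calc halfTwist234 * shift = s 2 * s 1 * (s 2 * s 0) * (s 1 * s 2) := by
        rw [halfTwist234, braid_s12, shift]; simp only [mul_assoc]
    _ = s 2 * s 1 * (s 0 * s 2) * (s 1 * s 2) := by rw [commute_s02.eq]
    _ = shiftRev * halfTwist234 := by
        rw [shiftRev, halfTwist234, braid_s12]; simp only [mul_assoc]

theorem halfTwist_semiconjBy_s0 : SemiconjBy halfTwist (s 0) (s 2) :=
  semiconjBy_halfTwist234_s1.mul_left shift_semiconjBy_s0

theorem halfTwist_semiconjBy_s2 : SemiconjBy halfTwist (s 2) (s 0) := by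
  rw [halfTwist, halfTwist234_mul_shift]
  exact shiftRev_semiconjBy_s1.mul_left semiconjBy_halfTwist234_s2

theorem commute_halfTwist_s1 : Commute halfTwist (s 1) :=
  semiconjBy_halfTwist234_s2.mul_left shift_semiconjBy_s1

theorem commute_halfTwist_sq_s0 : Commute (halfTwist ^ 2) (s 0) := by
  rw [sq]; exact halfTwist_semiconjBy_s2.mul_left halfTwist_semiconjBy_s0

theorem commute_halfTwist_sq_s2 : Commute (halfTwist ^ 2) (s 2) := by
  rw [sq]; exact halfTwist_semiconjBy_s0.mul_left halfTwist_semiconjBy_s2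

theorem commute_halfTwist234_of_commute {z : B5} (h1 : Commute z (s 1)) (h2 : Commute z (s 2)) :
    Commute z halfTwist234 :=
  (h1.mul_right h2).mul_right h1

theorem halfTwist_sq : halfTwist ^ 2 = halfTwist234 ^ 2 * loop4 :=
  calc halfTwist ^ 2 = halfTwist234 * (loop4 * halfTwist234) := by
        rw [sq]; nth_rw 2 [halfTwist]
        rw [halfTwist234_mul_shift, halfTwist, loop4]; simp only [mul_assoc]
    _ = halfTwist234 ^ 2 * loop4 := by
        rw [(commute_halfTwist234_of_commute commute_loop4_s1 commute_loop4_s2).eq, sq, mul_assoc]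

theorem commute_s2_X : Commute (s 2) X := by
  rw [X_eq]; exact ((Commute.refl _).pow_right 2).mul_right commute_loop5_s2.symm

theorem commute_s2_S : Commute (s 2) S := by
  rw [S_eq]; exact ((Commute.refl _).pow_right 2).mul_right commute_loop4_s2.symm

theorem commute_s2_Y : Commute (s 2) Y :=
  commute_s02.symm.mul_right (Commute.refl _)

theorem commute_loop4_Z : Commute loop4 Z := by
  rw [Z_eq]
  exact (((commute_loop4_s2.mul_right (commute_loop4_s1.pow_right 2)).mul_right
    commute_loop4_s2).mul_right (Commute.refl _))

theorem commute_loop4_S : Commute loop4 S := by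
  rw [S_eq]; exact (commute_loop4_s2.pow_right 2).mul_right (Commute.refl _)

theorem semiconjBy_s2_sq_Z_mul_S : SemiconjBy (s 2 ^ 2) (Z * S) (S * Z) := by
  rw [← mul_inv_eq_of_eq_mul S_eq]
  exact SemiconjBy.mul_left (by simp only [SemiconjBy, mul_assoc])
    (commute_loop4_Z.mul_right commute_loop4_S).inv_left

theorem commute_halfTwist234_sq_s1 : Commute (halfTwist234 ^ 2) (s 1) := by
  rw [sq]; exact semiconjBy_halfTwist234_s2.mul_left semiconjBy_halfTwist234_s1

theorem commute_halfTwist234_sq_s2 : Commute (halfTwist234 ^ 2) (s 2) := by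
  rw [sq]; exact semiconjBy_halfTwist234_s1.mul_left semiconjBy_halfTwist234_s2

theorem commute_halfTwist234_sq_of_commute {z : B5} (h1 : Commute z (s 1))
    (h2 : Commute z (s 2)) : Commute (halfTwist234 ^ 2) z :=
  (commute_halfTwist234_of_commute h1 h2).symm.pow_left 2

theorem commute_halfTwist234_sq_X : Commute (halfTwist234 ^ 2) X := by
  rw [X_eq]
  exact (commute_halfTwist234_sq_s2.pow_right 2).mul_right
    (commute_halfTwist234_sq_of_commute commute_loop5_s1 commute_loop5_s2)

theorem commute_halfTwist234_sq_loop4 : Commute (halfTwist234 ^ 2) loop4 :=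
  commute_halfTwist234_sq_of_commute commute_loop4_s1 commute_loop4_s2

theorem commute_halfTwist234_sq_S : Commute (halfTwist234 ^ 2) S := by
  rw [S_eq]
  exact (commute_halfTwist234_sq_s2.pow_right 2).mul_right commute_halfTwist234_sq_loop4

theorem commute_halfTwist234_sq_Z : Commute (halfTwist234 ^ 2) Z := by
  rw [Z_eq]
  have h1 := commute_halfTwist234_sq_s1
  have h2 := commute_halfTwist234_sq_s2
  exact (((h2.mul_right (h1.pow_right 2)).mul_right h2).mul_right commute_halfTwist234_sq_loop4)

theorem semiconjBy_loop4_Y_mul_S : SemiconjBy loop4 (Y * S) (S * Y) := by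
  have e₁ : Y * S = s 2 ^ 2 * (Y * loop4) := by
    rw [S_eq, ← mul_assoc, ← (commute_s2_Y.pow_left 2).eq, mul_assoc]
  have e₂ : S * Y = s 2 ^ 2 * (loop4 * Y) := by
    rw [S_eq, mul_assoc]
  rw [e₁, e₂]
  exact SemiconjBy.mul_right (commute_loop4_s2.pow_right 2) (by simp only [SemiconjBy, mul_assoc])

theorem commute_halfTwist_sq_Y_mul_S : Commute (halfTwist ^ 2) (Y * S) := by
  have h0 := commute_halfTwist_sq_s0
  have h1 := commute_halfTwist_s1.pow_left 2
  have h2 := commute_halfTwist_sq_s2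
  have hloop : Commute (halfTwist ^ 2) loop4 :=
    ((h0.mul_right h1).mul_right h2).mul_right ((h2.mul_right h1).mul_right h0)
  rw [Y, S_eq]
  exact (h0.mul_right h2).mul_right ((h2.pow_right 2).mul_right hloop)

theorem semiconjBy_halfTwist234_sq_S_mul_Y :
    SemiconjBy (halfTwist234 ^ 2) (S * Y) (Y * S) := by
  rw [eq_mul_inv_of_mul_eq halfTwist_sq.symm]
  exact SemiconjBy.mul_left commute_halfTwist_sq_Y_mul_S semiconjBy_loop4_Y_mul_S.inv_symm_left

theorem isConj_deltaABC_succ_left (a b c : ℕ) :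
    IsConj (deltaABC (a + 1) b c) (deltaABC a (b + 1) c) := by
  have e₁ : deltaABC (a + 1) b c = X * S ^ a * (S * Y) * S ^ b * Z * S ^ c := by
    rw [deltaABC, pow_succ]; simp only [mul_assoc]
  have e₂ : deltaABC a (b + 1) c = X * S ^ a * (Y * S) * S ^ b * Z * S ^ c := by
    rw [deltaABC, pow_succ']; simp only [mul_assoc]
  have hS := commute_halfTwist234_sq_S
  rw [e₁, e₂]
  exact SemiconjBy.isConj <| .mul_right (.mul_right (.mul_right (.mul_right (.mul_right
    commute_halfTwist234_sq_X (hS.pow_right a)) semiconjBy_halfTwist234_sq_S_mul_Y)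
    (hS.pow_right b)) commute_halfTwist234_sq_Z) (hS.pow_right c)

theorem isConj_deltaABC_succ_right (a b c : ℕ) :
    IsConj (deltaABC a b (c + 1)) (deltaABC a (b + 1) c) := by
  have e₁ : deltaABC a b (c + 1) = X * S ^ a * Y * S ^ b * (Z * S) * S ^ c := by
    rw [deltaABC, pow_succ']; simp only [mul_assoc]
  have e₂ : deltaABC a (b + 1) c = X * S ^ a * Y * S ^ b * (S * Z) * S ^ c := by
    rw [deltaABC, pow_succ]; simp only [mul_assoc]
  have hS : Commute (s 2 ^ 2) S := commute_s2_S.pow_left 2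
  rw [e₁, e₂]
  exact SemiconjBy.isConj <| .mul_right (.mul_right (.mul_right (.mul_right (.mul_right
    (commute_s2_X.pow_left 2) (hS.pow_right a)) (commute_s2_Y.pow_left 2))
    (hS.pow_right b)) semiconjBy_s2_sq_Z_mul_S) (hS.pow_right c)

theorem isConj_deltaABC_zero_right (a b : ℕ) : IsConj (deltaABC a b 0) (deltaABC (a + b) 0 0) := by
  induction b generalizing a with
  | zero => rfl
  | succ b ih =>
    have h := (isConj_deltaABC_succ_left a b 0).symm.trans (ih (a + 1))
    rwa [show a + 1 + b = a + (b + 1) by omega] at h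

theorem isConj_deltaABC_add (a b c : ℕ) : IsConj (deltaABC a b c) (deltaABC (a + b + c) 0 0) := by
  induction c generalizing b with
  | zero => exact isConj_deltaABC_zero_right a b
  | succ c ih =>
    have h := (isConj_deltaABC_succ_right a b c).trans (ih (b + 1))
    rwa [show a + (b + 1) + c = a + b + (c + 1) by omega] at h

theorem isConj_deltaABC_of_add_eq {a b c a' b' c' : ℕ} (h : a + b + c = a' + b' + c') :
    IsConj (deltaABC a b c) (deltaABC a' b' c') := by
  refine (isConj_deltaABC_add a b c).trans ?_
  rw [h]
  exact (isConj_deltaABC_add a' b' c').symm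

theorem deltaABC_conj_deltaABC_general (L a b c a' b' c' : ℕ)
    (habc : a + b + c = (L - 5) / 2) (habc' : a' + b' + c' = (L - 5) / 2) :
    ∃ g : B5, g * deltaABC a b c * g⁻¹ = deltaABC a' b' c' :=
  isConj_iff.mp (isConj_deltaABC_of_add_eq (habc.trans habc'.symm))

/-- For every odd `L ≥ 5` and any two triples of nonnegative integers summing to
`(L − 5)/2`, the braids `δ_{a,b,c}` and `δ_{a',b',c'}` are conjugate in `B_5`. -/
theorem deltaABC_conj_deltaABC (L a b c a' b' c' : ℕ) (hodd : Odd L) (hL : 5 ≤ L)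
    (habc : a + b + c = (L - 5) / 2) (habc' : a' + b' + c' = (L - 5) / 2) :
    ∃ g : B5, g * deltaABC a b c * g⁻¹ = deltaABC a' b' c' :=
  deltaABC_conj_deltaABC_general L a b c a' b' c' habc habc'
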